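/- arXiv:1502.01901 — 4 statements merged into one kernel-verified Lean document; each statement's English description precedes it below -/
import Mathlib

section
/- Let Λ = (λ₁, ..., λₙ) be a vector of nonzero complex numbers. Suppose there exist n linearly independent multi-indices I = (i₁, ..., iₙ) in N^n \ {0} such that λ₁^{i₁} ⋯ λₙ^{iₙ} = 1 for each of them. Then every λⱼ is a root of unity. -/
/-!
Let `A` be the integer matrix whose rows are the resonant multi-indices. Every integer
combination `v ᵥ* A` of the rows is again a multiplicative resonance, and
`adj A * A = det A • 1` exhibits `det A • eⱼ` as such a combination. Hence `λⱼ ^ det A = 1`,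
and `det A ≠ 0` because the rows are linearly independent over `ℚ`.
-/

open scoped Matrix

theorem Finset.prod_zpow_eq_zpow_sum {G ι : Type*} [CommGroup G] (s : Finset ι) (f : ι → ℤ)
    (a : G) : ∏ i ∈ s, a ^ f i = a ^ ∑ i ∈ s, f i :=
  cons_induction (by simp) (fun _ _ _ _ ↦ by simp [prod_cons, sum_cons, zpow_add, *]) s

namespace Matrix

variable {G ι : Type*} [CommGroup G] [Fintype ι]

theorem prod_zpow_vecMul_eq_one {x : ι → G} {A : Matrix ι ι ℤ}
    (h : ∀ k, ∏ t, x t ^ A k t = 1) (v : ι → ℤ) : ∏ t, x t ^ (v ᵥ* A) t = 1 := by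
  calc ∏ t, x t ^ (v ᵥ* A) t = ∏ t, ∏ k, (x t ^ A k t) ^ v k := by
        refine Finset.prod_congr rfl fun t _ => ?_
        rw [vecMul, dotProduct, ← Finset.prod_zpow_eq_zpow_sum]
        exact Finset.prod_congr rfl fun k _ => by rw [mul_comm, _root_.zpow_mul]
    _ = ∏ k, (∏ t, x t ^ A k t) ^ v k := by
        rw [Finset.prod_comm]
        simp only [Finset.prod_zpow]
    _ = 1 := by simp [h]

theorem zpow_det_eq_one_of_prod_zpow_eq_one [DecidableEq ι] {x : ι → G}
    {A : Matrix ι ι ℤ} (h : ∀ k, ∏ t, x t ^ A k t = 1) (j : ι) : x j ^ A.det = 1 := by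
  have hrow : A.adjugate j ᵥ* A = Pi.single j A.det := by
    ext t
    rw [← mul_apply_eq_vecMul, adjugate_mul, smul_apply, one_eq_pi_single, smul_eq_mul]
    simp [Pi.single_apply]
  simpa [hrow, Pi.single_apply] using prod_zpow_vecMul_eq_one h (A.adjugate j)

end Matrix

theorem Matrix.det_ne_zero_of_linearIndependent_rows {ι : Type*} [Fintype ι] [DecidableEq ι]
    {A : Matrix ι ι ℤ} (hA : LinearIndependent ℚ fun k j => (A k j : ℚ)) : A.det ≠ 0 := by
  have hunit : IsUnit (A.map ((↑) : ℤ → ℚ)) := linearIndependent_rows_iff_isUnit.mp hA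
  rw [← Int.cast_ne_zero (α := ℚ), Int.cast_det]
  exact ((isUnit_iff_isUnit_det _).mp hunit).ne_zero

/-- If `Λ = (λ₁, …, λₙ)` is a vector of nonzero complex numbers admitting `n`
linearly independent (over `ℚ`) multi-indices `I ∈ ℕⁿ \ {0}` with
`λ₁^{i₁} ⋯ λₙ^{iₙ} = 1`, then every `λⱼ` is a root of unity. -/
theorem stmt_2 {n : ℕ} (lam : Fin n → ℂ) (hlam : ∀ j, lam j ≠ 0)
    (I : Fin n → Fin n → ℕ)
    (hind : LinearIndependent ℚ (fun k => (fun j => (I k j : ℚ)) : Fin n → Fin n → ℚ))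
    (hres : ∀ k, ∏ j, lam j ^ I k j = 1) :
    ∀ j, ∃ m : ℕ, 0 < m ∧ lam j ^ m = 1 := by
  intro j
  let A : Matrix (Fin n) (Fin n) ℤ := Matrix.of fun k t => (I k t : ℤ)
  let u : Fin n → ℂˣ := fun t => Units.mk0 (lam t) (hlam t)
  have hdet : A.det ≠ 0 := A.det_ne_zero_of_linearIndependent_rows (by simpa [A] using hind)
  have hresu : ∀ k, ∏ t, u t ^ A k t = 1 := fun k => by
    ext
    simpa [A, u] using hres k
  rw [← isOfFinOrder_iff_pow_eq_one, ← Units.val_mk0 (hlam j), Units.isOfFinOrder_val,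
    isOfFinOrder_iff_zpow_eq_one]
  exact ⟨A.det, hdet, Matrix.zpow_det_eq_one_of_prod_zpow_eq_one hresu j⟩
end

section
/- Let f̂(x₁, x₂) = Σ a_{i,j} x₁^i x₂^j be a formal power series in two variables with zero constant term, and let G(x₁, x₂) = (x₁ + x₂, x₂) (a Jordan block with eigenvalue 1). If f̂ ∘ G = f̂, then a_{i,j} = 0 for all i > 0; that is, f̂ depends only on x₂. -/
/-- Let `f̂(x₁,x₂) = Σ a i j • x₁^i x₂^j` be a formal power series (given by its
coefficient function `a`) with zero constant term, invariant under
`G(x₁,x₂) = (x₁ + x₂, x₂)`.  The invariance `f̂(x₁+x₂, x₂) = f̂(x₁,x₂)` reads,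
coefficientwise, `a i j = Σ_{k=0}^{j} C(i+k,k) a (i+k) (j-k)`.  Then
`a i j = 0` for all `i > 0`, i.e. `f̂` depends only on `x₂`. -/
theorem stmt_4 (a : ℕ → ℕ → ℂ) (hconst : a 0 0 = 0)
    (hinv : ∀ i j, a i j =
      ∑ k ∈ Finset.range (j + 1), (Nat.choose (i + k) k : ℂ) * a (i + k) (j - k)) :
    ∀ i j, 0 < i → a i j = 0 := by
  have key : ∀ j i, a (i + 1) j = 0 := by
    intro j
    induction j using Nat.strong_induction_on with
    | _ j IH =>
      intro i
      have h := hinv i (j + 1)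
      rw [show j + 1 + 1 = j + 1 + 1 from rfl, Finset.sum_range_succ',
        Finset.sum_range_succ'] at h
      have hz : (∑ k ∈ Finset.range j,
          (Nat.choose (i + (k + 1 + 1)) (k + 1 + 1) : ℂ) *
            a (i + (k + 1 + 1)) (j + 1 - (k + 1 + 1))) = 0 := by
        apply Finset.sum_eq_zero
        intro k hk
        simp only [Finset.mem_range] at hk
        have h0 := IH (j + 1 - (k + 1 + 1)) (by omega) (i + k + 1)
        rw [show i + (k + 1 + 1) = i + k + 1 + 1 by ring, h0, mul_zero]
      rw [hz] at h
      simp only [Nat.add_sub_cancel, Nat.choose_one_right, Nat.add_zero,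
        Nat.choose_self, Nat.choose_zero_right, Nat.cast_one, one_mul,
        Nat.cast_add, Nat.cast_one, zero_add] at h
      have h2 : ((i : ℂ) + 1) * a (i + 1) j = 0 := by
        push_cast at h
        linear_combination -h
      have hne : ((i : ℂ) + 1) ≠ 0 := Nat.cast_add_one_ne_zero i
      exact (mul_eq_zero.mp h2).resolve_left hne
  intro i j hi
  obtain ⟨i, rfl⟩ := Nat.exists_eq_add_of_lt hi
  rw [show 0 + i + 1 = i + 1 by ring]
  exact key j i
end

section
/- Let f̂ be a nonzero formal power series in two variables with zero constant term, and let G(x₁, x₂) = (λx₁ + x₂, λx₂) with λ a nonzero complex number. If f̂ ∘ G = f̂, then λ^m = 1 for some positive integer m. -/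
/-- Let `f̂(x₁,x₂) = Σ a i j • x₁^i x₂^j` be a nonzero formal power series (given
by its coefficient function `a`) with zero constant term, invariant under
`G(x₁,x₂) = (λx₁ + x₂, λx₂)` with `λ ≠ 0`.  The invariance `f̂ ∘ G = f̂` reads,
coefficientwise, `a i j = Σ_{k=0}^{j} C(i+k,k) λ^{i+j-k} a (i+k) (j-k)`.
Then `λ^m = 1` for some positive integer `m`. -/
theorem stmt_5 (a : ℕ → ℕ → ℂ) (l : ℂ) (hl : l ≠ 0)
    (hconst : a 0 0 = 0) (hne : ∃ i j, a i j ≠ 0)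
    (hinv : ∀ i j, a i j =
      ∑ k ∈ Finset.range (j + 1),
        (Nat.choose (i + k) k : ℂ) * l ^ (i + j - k) * a (i + k) (j - k)) :
    ∃ m : ℕ, 0 < m ∧ l ^ m = 1 := by
  by_contra h
  push_neg at h
  have key : ∀ j i, a i j = 0 := by
    intro j
    induction j using Nat.strong_induction_on with
    | _ j ih =>
      intro i
      rcases Nat.eq_zero_or_pos (i + j) with hn | hn
      · obtain ⟨hi, hj⟩ := Nat.add_eq_zero.mp hn
        subst hi; subst hj; exact hconst
      · have h1 := hinv i j
        rw [Finset.sum_range_succ'] at h1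
        have hz : ∀ k ∈ Finset.range j,
            (Nat.choose (i + (k + 1)) (k + 1) : ℂ) * l ^ (i + j - (k + 1)) *
              a (i + (k + 1)) (j - (k + 1)) = 0 := by
          intro k hk
          rw [ih (j - (k + 1)) (by simp at hk; omega)]
          ring
        rw [Finset.sum_congr rfl hz, Finset.sum_const_zero, zero_add] at h1
        simp only [Nat.sub_zero, Nat.add_zero, Nat.choose_zero_right,
          Nat.cast_one, one_mul] at h1
        have h2 : (1 - l ^ (i + j)) * a i j = 0 := by linear_combination h1
        rcases mul_eq_zero.mp h2 with h3 | h3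
        · exact absurd (sub_eq_zero.mp h3).symm (h (i + j) hn)
        · exact h3
  obtain ⟨i, j, hij⟩ := hne
  exact hij (key j i)
end

section
/- Let f̂₁, ..., f̂ₙ be formal power series in n variables with zero constant term that are transverse at the origin, i.e., (df̂₁ ∧ ⋯ ∧ df̂ₙ)(0) ≠ 0. Then the map H = (f̂₁, ..., f̂ₙ) is a formal diffeomorphism, the vector field X = (dH)^{-1} · H satisfies Ĝ*X = X for every Ĝ in the invariance group H(f̂₁, ..., f̂ₙ), and X = R + higher order terms. -/
open MvPowerSeries

/-- Formal partial derivative `∂/∂xᵢ` of a multivariate formal power series. -/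
noncomputable def pd {n : ℕ} (i : Fin n) (f : MvPowerSeries (Fin n) ℂ) :
    MvPowerSeries (Fin n) ℂ :=
  fun I => ((I i : ℂ) + 1) * MvPowerSeries.coeff (I + Finsupp.single i 1) f

/-- Substitution `F ∘ G` of an `n`-tuple `G` of formal power series with zero
constant term into `F`. -/
noncomputable def subst {n : ℕ} (G : Fin n → MvPowerSeries (Fin n) ℂ)
    (F : MvPowerSeries (Fin n) ℂ) : MvPowerSeries (Fin n) ℂ :=
  fun I => ∑ J ∈ Finset.Iic (Finsupp.equivFunOnFinite.symm fun _ => ∑ j, I j),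
    MvPowerSeries.coeff J F * MvPowerSeries.coeff I (∏ j, G j ^ J j)

namespace Aux

variable {n : ℕ}

abbrev R (n : ℕ) := MvPowerSeries (Fin n) ℂ
abbrev E (n : ℕ) := Fin n →₀ ℕ

/-- total degree -/
def dg (I : E n) : ℕ := ∑ j, I j

lemma dg_add (I J : E n) : dg (I + J) = dg I + dg J := by
  simp [dg, Finsupp.add_apply, Finset.sum_add_distrib]

lemma dg_single (j : Fin n) : dg (Finsupp.single j 1) = 1 := by
  simp [dg, Finsupp.single_apply]

lemma coord_le_dg (j : Fin n) (I : E n) : I j ≤ dg I :=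
  Finset.single_le_sum (f := fun k => I k) (fun _ _ => Nat.zero_le _) (Finset.mem_univ j)

lemma dg_mono {I J : E n} (h : I ≤ J) : dg I ≤ dg J :=
  Finset.sum_le_sum fun k _ => h k

lemma dg_eq_zero {I : E n} (h : dg I = 0) : I = 0 := by
  ext j
  have := Finset.sum_eq_zero_iff.mp h j (Finset.mem_univ j)
  simpa using this

lemma coeff_pd (j : Fin n) (f : R n) (I : E n) :
    MvPowerSeries.coeff I (pd j f) =
      ((I j : ℂ) + 1) * MvPowerSeries.coeff (I + Finsupp.single j 1) f := rfl

lemma coeff_subst (G : Fin n → R n) (F : R n) (I : E n) :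
    MvPowerSeries.coeff I (_root_.subst G F) =
      ∑ J ∈ Finset.Iic (Finsupp.equivFunOnFinite.symm fun _ => ∑ j, I j),
        MvPowerSeries.coeff J F * MvPowerSeries.coeff I (∏ j, G j ^ J j) := rfl

lemma pd_add (j : Fin n) (a b : R n) : pd j (a + b) = pd j a + pd j b := by
  ext I
  simp [coeff_pd, map_add, mul_add]

lemma pd_smul (j : Fin n) (c : ℂ) (a : R n) : pd j (c • a) = c • pd j a := by
  ext I
  simp only [coeff_pd, MvPowerSeries.coeff_smul]
  ring


open Finset in
lemma reindex (j : Fin n) (I : E n) (φ : E n → E n → ℂ) :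
    ∑ pq ∈ antidiagonal (I + Finsupp.single j 1), (((pq.1 : E n) j : ℕ) : ℂ) * φ pq.1 pq.2 =
    ∑ pq ∈ antidiagonal I, (((pq.1 : E n) j : ℂ) + 1) * φ (pq.1 + Finsupp.single j 1) pq.2 := by
  set e := Finsupp.single j 1 with he
  rw [← Finset.sum_filter_of_ne (p := fun pq => e ≤ pq.1)]
  · refine Finset.sum_bij' (fun pq _ => (pq.1 - e, pq.2)) (fun pq _ => (pq.1 + e, pq.2)) ?_ ?_ ?_ ?_ ?_
    · rintro ⟨p, q⟩ hpq
      simp only [Finset.mem_filter, Finset.HasAntidiagonal.mem_antidiagonal] at hpq ⊢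
      obtain ⟨h1, h2⟩ := hpq
      have hp : p - e + e = p := tsub_add_cancel_of_le h2
      have : p - e + e + q = I + e := by rw [hp]; exact h1
      rw [add_right_comm] at this
      exact add_right_cancel this
    · rintro ⟨p, q⟩ hpq
      simp only [Finset.HasAntidiagonal.mem_antidiagonal] at hpq
      simp only [Finset.mem_filter, Finset.HasAntidiagonal.mem_antidiagonal]
      exact ⟨by rw [add_right_comm, hpq], le_add_self⟩
    · rintro ⟨p, q⟩ hpq
      simp only [Finset.mem_filter] at hpq
      simp [tsub_add_cancel_of_le hpq.2]
    · rintro ⟨p, q⟩ _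
      simp
    · rintro ⟨p, q⟩ hpq
      simp only [Finset.mem_filter, Finset.HasAntidiagonal.mem_antidiagonal] at hpq
      obtain ⟨h1, h2⟩ := hpq
      have h2' : 1 ≤ p j := by
        have := h2 j
        simpa [he, Finsupp.single_apply] using this
      have hc : (((p - e) j : ℕ) : ℂ) + 1 = ((p j : ℕ) : ℂ) := by
        have h3 : (p - e) j = p j - 1 := by
          simp [he, Finsupp.tsub_apply, Finsupp.single_apply]
        rw [h3, Nat.cast_sub h2']
        ring
      simp only
      rw [hc, tsub_add_cancel_of_le h2]
  · rintro ⟨p, q⟩ hpq hne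
    by_contra hle
    have h0 : p j = 0 := by
      by_contra h0
      exact hle (by simpa [he, Finsupp.single_le_iff] using Nat.one_le_iff_ne_zero.mpr h0)
    simp [h0] at hne

open Finset in
lemma pd_mul (j : Fin n) (a b : R n) :
    pd j (a * b) = pd j a * b + a * pd j b := by
  ext I
  set e := Finsupp.single j 1 with he
  have key : MvPowerSeries.coeff I (pd j (a * b)) =
      (∑ pq ∈ antidiagonal (I + e), (((pq.1 : E n) j : ℕ) : ℂ) *
        (MvPowerSeries.coeff pq.1 a * MvPowerSeries.coeff pq.2 b)) +
      (∑ pq ∈ antidiagonal (I + e), (((pq.2 : E n) j : ℕ) : ℂ) *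
        (MvPowerSeries.coeff pq.1 a * MvPowerSeries.coeff pq.2 b)) := by
    rw [coeff_pd, ← Finset.sum_add_distrib, MvPowerSeries.coeff_mul, Finset.mul_sum]
    refine Finset.sum_congr rfl ?_
    rintro ⟨p, q⟩ hpq
    simp only [Finset.HasAntidiagonal.mem_antidiagonal] at hpq
    have hnat : (I : E n) j + 1 = p j + q j := by
      have := congrArg (fun K => (K : E n) j) hpq
      simpa [he, Finsupp.add_apply, Finsupp.single_apply] using this.symm
    have hc : ((I j : ℕ) : ℂ) + 1 = ((p j : ℕ) : ℂ) + ((q j : ℕ) : ℂ) := by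
      exact_mod_cast congrArg (Nat.cast : ℕ → ℂ) hnat
    rw [hc]
    ring
  rw [key, map_add]
  congr 1
  · rw [reindex j I (fun p q => MvPowerSeries.coeff p a * MvPowerSeries.coeff q b),
      MvPowerSeries.coeff_mul]
    refine Finset.sum_congr rfl ?_
    rintro ⟨p, q⟩ _
    rw [coeff_pd]
    ring
  · have hswap : ∑ pq ∈ antidiagonal (I + e), (((pq.2 : E n) j : ℕ) : ℂ) *
        (MvPowerSeries.coeff pq.1 a * MvPowerSeries.coeff pq.2 b) =
        ∑ pq ∈ antidiagonal (I + e), (((pq.1 : E n) j : ℕ) : ℂ) *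
        (MvPowerSeries.coeff pq.2 a * MvPowerSeries.coeff pq.1 b) := by
      conv_lhs => rw [← Finset.HasAntidiagonal.map_swap_antidiagonal (n := I + e)]
      rw [Finset.sum_map]
      refine Finset.sum_congr rfl fun pq _ => ?_
      simp [mul_comm]
    rw [hswap, reindex j I (fun p q => MvPowerSeries.coeff q a * MvPowerSeries.coeff p b),
      mul_comm a (pd j b), MvPowerSeries.coeff_mul]
    refine Finset.sum_congr rfl ?_
    rintro ⟨p, q⟩ _
    rw [coeff_pd]
    ring


/-! ### Order / vanishing -/

noncomputable def cfun (d : ℕ) : E n := Finsupp.equivFunOnFinite.symm fun _ => d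

lemma cfun_apply (d : ℕ) (j : Fin n) : (cfun (n := n) d) j = d := rfl

lemma le_cfun {J : E n} {d : ℕ} (h : dg J ≤ d) : J ≤ cfun d :=
  Finsupp.le_def.mpr fun j => le_trans (coord_le_dg j J) h

def ordGE (a : ℕ) (φ : R n) : Prop :=
  ∀ I : E n, dg I < a → MvPowerSeries.coeff I φ = 0

lemma ordGE_mul {a b : ℕ} {φ ψ : R n} (hφ : ordGE a φ) (hψ : ordGE b ψ) :
    ordGE (a + b) (φ * ψ) := by
  intro I hI
  rw [MvPowerSeries.coeff_mul]
  refine Finset.sum_eq_zero ?_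
  rintro ⟨p, q⟩ hpq
  simp only [Finset.HasAntidiagonal.mem_antidiagonal] at hpq
  have hd : dg p + dg q = dg I := by rw [← dg_add, hpq]
  by_cases h : dg p < a
  · rw [hφ p h, zero_mul]
  · have : dg q < b := by omega
    rw [hψ q this, mul_zero]

lemma ordGE_pow {φ : R n} (h1 : ordGE 1 φ) (k : ℕ) : ordGE k (φ ^ k) := by
  induction k with
  | zero => intro I hI; omega
  | succ m ih => rw [pow_succ]; exact ordGE_mul ih h1

lemma ordGE_one_of_constantCoeff {φ : R n}
    (h : MvPowerSeries.constantCoeff φ = 0) : ordGE 1 φ := by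
  intro I hI
  have h0 : I = 0 := dg_eq_zero (by omega)
  subst h0
  simpa [MvPowerSeries.coeff_zero_eq_constantCoeff] using h

lemma ordGE_prodpow {G : Fin n → R n}
    (hG : ∀ j, MvPowerSeries.constantCoeff (G j) = 0) (J : E n) :
    ordGE (dg J) (∏ j, G j ^ J j) := by
  have main : ∀ s : Finset (Fin n), ordGE (∑ j ∈ s, J j) (∏ j ∈ s, G j ^ J j) := by
    intro s
    induction s using Finset.cons_induction with
    | empty => intro I hI; simp at hI
    | cons a s ha ih =>
      rw [Finset.prod_cons, Finset.sum_cons]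
      exact ordGE_mul (ordGE_pow (ordGE_one_of_constantCoeff (hG a)) (J a)) ih
  exact main Finset.univ

lemma vanish {G : Fin n → R n}
    (hG : ∀ j, MvPowerSeries.constantCoeff (G j) = 0) {I J : E n}
    (h : dg I < dg J) : MvPowerSeries.coeff I (∏ j, G j ^ J j) = 0 :=
  ordGE_prodpow hG J I h

/-! ### subst basics -/

lemma coeff_subst' (G : Fin n → R n) (F : R n) (I : E n) :
    MvPowerSeries.coeff I (_root_.subst G F) =
      ∑ J ∈ Finset.Iic (cfun (dg I)),
        MvPowerSeries.coeff J F * MvPowerSeries.coeff I (∏ j, G j ^ J j) := rfl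

lemma coeff_subst_ext {G : Fin n → R n}
    (hG : ∀ j, MvPowerSeries.constantCoeff (G j) = 0)
    (F : R n) (I : E n) (S : Finset (E n)) (hS : ∀ J, dg J ≤ dg I → J ∈ S) :
    MvPowerSeries.coeff I (_root_.subst G F) =
      ∑ J ∈ S, MvPowerSeries.coeff J F * MvPowerSeries.coeff I (∏ j, G j ^ J j) := by
  rw [coeff_subst']
  have hzero : ∀ J : E n, ¬ dg J ≤ dg I →
      MvPowerSeries.coeff J F * MvPowerSeries.coeff I (∏ j, G j ^ J j) = 0 := by
    intro J hJ
    rw [vanish hG (by omega), mul_zero]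
  rw [Finset.sum_subset (Finset.subset_union_right (s₁ := S)) (fun J hJ hJ2 => by
    refine hzero J fun hle => hJ2 ?_
    exact Finset.mem_Iic.mpr (le_cfun hle))]
  rw [Finset.sum_subset (Finset.subset_union_left (s₂ := Finset.Iic (cfun (dg I))))
    (fun J hJ hJ2 => hzero J fun hle => hJ2 (hS J hle))]

lemma subst_add (G : Fin n → R n) (a b : R n) :
    _root_.subst G (a + b) = _root_.subst G a + _root_.subst G b := by
  ext I
  simp [coeff_subst', map_add, add_mul, Finset.sum_add_distrib]

lemma subst_zero (G : Fin n → R n) : _root_.subst G 0 = 0 := by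
  ext I
  simp [coeff_subst']

lemma subst_smul (G : Fin n → R n) (c : ℂ) (a : R n) :
    _root_.subst G (c • a) = c • _root_.subst G a := by
  ext I
  simp [coeff_subst', MvPowerSeries.coeff_smul, Finset.mul_sum, mul_assoc]

lemma subst_monomial {G : Fin n → R n}
    (hG : ∀ j, MvPowerSeries.constantCoeff (G j) = 0) (J : E n) (c : ℂ) :
    _root_.subst G (MvPowerSeries.monomial J c) = c • ∏ j, G j ^ J j := by
  classical
  ext I
  rw [coeff_subst_ext hG _ I (insert J (Finset.Iic (cfun (dg I))))
    (fun K hK => Finset.mem_insert_of_mem (Finset.mem_Iic.mpr (le_cfun hK)))]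
  rw [Finset.sum_eq_single_of_mem J (Finset.mem_insert_self _ _)]
  · rw [MvPowerSeries.coeff_monomial_same, MvPowerSeries.coeff_smul]
  · intro K _ hK
    rw [MvPowerSeries.coeff_monomial, if_neg hK, zero_mul]

lemma subst_one {G : Fin n → R n}
    (hG : ∀ j, MvPowerSeries.constantCoeff (G j) = 0) :
    _root_.subst G 1 = 1 := by
  rw [← MvPowerSeries.monomial_zero_one (σ := Fin n) (R := ℂ), subst_monomial hG]
  simp

lemma coeff_subst_vanish {G : Fin n → R n}
    (hG : ∀ j, MvPowerSeries.constantCoeff (G j) = 0)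
    {F : R n} {D : ℕ} (hF : ∀ J, dg J ≤ D → MvPowerSeries.coeff J F = 0)
    {I : E n} (hI : dg I ≤ D) : MvPowerSeries.coeff I (_root_.subst G F) = 0 := by
  rw [coeff_subst']
  refine Finset.sum_eq_zero fun J _ => ?_
  by_cases h : dg J ≤ D
  · rw [hF J h, zero_mul]
  · rw [vanish hG (by omega), mul_zero]

lemma constantCoeff_subst (G : Fin n → R n)
    (hG : ∀ j, MvPowerSeries.constantCoeff (G j) = 0) (F : R n) :
    MvPowerSeries.constantCoeff (_root_.subst G F) =
      MvPowerSeries.constantCoeff F := by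
  classical
  rw [← MvPowerSeries.coeff_zero_eq_constantCoeff_apply,
    ← MvPowerSeries.coeff_zero_eq_constantCoeff_apply, coeff_subst']
  have h0 : cfun (n := n) (dg (0 : E n)) = 0 := by
    ext j
    simp [cfun_apply, dg]
  have hIic : Finset.Iic (cfun (n := n) (dg (0 : E n))) = {0} := by
    rw [h0]
    ext K
    simp [Finset.mem_Iic, le_zero_iff]
  rw [hIic, Finset.sum_singleton]
  simp


/-! ### truncation and multiplicativity -/

lemma trunc_coeff (F : R n) (D : ℕ) {J : E n} (hJ : dg J ≤ D) :
    MvPowerSeries.coeff J (∑ K ∈ Finset.Iic (cfun (n := n) D),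
      MvPowerSeries.monomial K (MvPowerSeries.coeff K F)) =
      MvPowerSeries.coeff J F := by
  classical
  rw [map_sum, Finset.sum_eq_single_of_mem J (Finset.mem_Iic.mpr (le_cfun hJ))]
  · rw [MvPowerSeries.coeff_monomial_same]
  · intro K _ hK
    rw [MvPowerSeries.coeff_monomial, if_neg (fun h => hK h.symm)]

lemma decomp (F : R n) (D : ℕ) :
    ∃ Q : R n, F = (∑ K ∈ Finset.Iic (cfun (n := n) D),
      MvPowerSeries.monomial K (MvPowerSeries.coeff K F)) + Q ∧
      ∀ J, dg J ≤ D → MvPowerSeries.coeff J Q = 0 := by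
  refine ⟨F - _, by ring, fun J hJ => ?_⟩
  rw [map_sub, trunc_coeff F D hJ, sub_self]

lemma mul_vanish_left {Q F : R n} {D : ℕ}
    (hQ : ∀ J, dg J ≤ D → MvPowerSeries.coeff J Q = 0) :
    ∀ J, dg J ≤ D → MvPowerSeries.coeff J (Q * F) = 0 := by
  intro J hJ
  rw [MvPowerSeries.coeff_mul]
  refine Finset.sum_eq_zero ?_
  rintro ⟨p, q⟩ hpq
  simp only [Finset.HasAntidiagonal.mem_antidiagonal] at hpq
  have hdp : dg p ≤ dg J := by
    rw [← hpq, dg_add]; omega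
  rw [hQ p (le_trans hdp hJ), zero_mul]

lemma mul_vanish_right {Q F : R n} {D : ℕ}
    (hQ : ∀ J, dg J ≤ D → MvPowerSeries.coeff J Q = 0) :
    ∀ J, dg J ≤ D → MvPowerSeries.coeff J (F * Q) = 0 := by
  intro J hJ
  rw [mul_comm]
  exact mul_vanish_left hQ J hJ

lemma prodpow_add (G : Fin n → R n) (J K : E n) :
    (∏ j, G j ^ (J + K) j) = (∏ j, G j ^ J j) * (∏ j, G j ^ K j) := by
  rw [← Finset.prod_mul_distrib]
  exact Finset.prod_congr rfl fun j _ => by rw [Finsupp.add_apply, pow_add]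

lemma subst_monomial_mul {G : Fin n → R n}
    (hG : ∀ j, MvPowerSeries.constantCoeff (G j) = 0)
    (J K : E n) (c d : ℂ) :
    _root_.subst G (MvPowerSeries.monomial J c * MvPowerSeries.monomial K d) =
      _root_.subst G (MvPowerSeries.monomial J c) * _root_.subst G (MvPowerSeries.monomial K d) := by
  rw [MvPowerSeries.monomial_mul_monomial, subst_monomial hG, subst_monomial hG,
    subst_monomial hG, prodpow_add, smul_mul_assoc, mul_smul_comm, ← mul_smul]

noncomputable def substHom (G : Fin n → R n) : R n →+ R n :=
  AddMonoidHom.mk' (_root_.subst G) (subst_add G)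

lemma subst_sum {ι : Type*} (G : Fin n → R n) (s : Finset ι) (f : ι → R n) :
    _root_.subst G (∑ i ∈ s, f i) = ∑ i ∈ s, _root_.subst G (f i) :=
  map_sum (substHom G) f s

lemma subst_mul {G : Fin n → R n}
    (hG : ∀ j, MvPowerSeries.constantCoeff (G j) = 0) (a b : R n) :
    _root_.subst G (a * b) = _root_.subst G a * _root_.subst G b := by
  ext I
  obtain ⟨Q₁, hA, hQ₁⟩ := decomp a (dg I)
  obtain ⟨Q₂, hB, hQ₂⟩ := decomp b (dg I)
  set P₁ := ∑ K ∈ Finset.Iic (cfun (n := n) (dg I)),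
    MvPowerSeries.monomial K (MvPowerSeries.coeff K a) with hP₁
  set P₂ := ∑ K ∈ Finset.Iic (cfun (n := n) (dg I)),
    MvPowerSeries.monomial K (MvPowerSeries.coeff K b) with hP₂
  have hPP : _root_.subst G (P₁ * P₂) = _root_.subst G P₁ * _root_.subst G P₂ := by
    rw [hP₁, hP₂, Finset.sum_mul_sum, subst_sum]
    have step : ∀ K ∈ Finset.Iic (cfun (n := n) (dg I)),
        _root_.subst G (∑ L ∈ Finset.Iic (cfun (n := n) (dg I)),
          MvPowerSeries.monomial K (MvPowerSeries.coeff K a) *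
          MvPowerSeries.monomial L (MvPowerSeries.coeff L b)) =
        ∑ L ∈ Finset.Iic (cfun (n := n) (dg I)),
          _root_.subst G (MvPowerSeries.monomial K (MvPowerSeries.coeff K a)) *
          _root_.subst G (MvPowerSeries.monomial L (MvPowerSeries.coeff L b)) := by
      intro K _
      rw [subst_sum]
      exact Finset.sum_congr rfl fun L _ => subst_monomial_mul hG _ _ _ _
    rw [Finset.sum_congr rfl step, ← Finset.sum_mul_sum, ← subst_sum, ← subst_sum]
  have hab : a * b = P₁ * P₂ + (P₁ * Q₂ + Q₁ * P₂ + Q₁ * Q₂) := by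
    rw [hA, hB]; ring
  have hQ₁' : ∀ J, dg J ≤ dg I → MvPowerSeries.coeff J Q₁ = 0 := hQ₁
  rw [hab, subst_add, subst_add, subst_add, map_add, map_add, map_add]
  rw [coeff_subst_vanish hG (mul_vanish_right hQ₂) le_rfl,
    coeff_subst_vanish hG (mul_vanish_left hQ₁) le_rfl,
    coeff_subst_vanish hG (mul_vanish_left hQ₁) le_rfl]
  have hsa : _root_.subst G a = _root_.subst G P₁ + _root_.subst G Q₁ := by rw [hA, subst_add]
  have hsb : _root_.subst G b = _root_.subst G P₂ + _root_.subst G Q₂ := by rw [hB, subst_add]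
  have hrhs : _root_.subst G a * _root_.subst G b = _root_.subst G P₁ * _root_.subst G P₂ +
      (_root_.subst G P₁ * _root_.subst G Q₂ + _root_.subst G Q₁ * _root_.subst G P₂ + _root_.subst G Q₁ * _root_.subst G Q₂) := by
    rw [hsa, hsb]; ring
  have hvQ₁ : ∀ p : E n, dg p ≤ dg I → MvPowerSeries.coeff p (_root_.subst G Q₁) = 0 :=
    fun p hp => coeff_subst_vanish hG hQ₁ hp
  have hvQ₂ : ∀ p : E n, dg p ≤ dg I → MvPowerSeries.coeff p (_root_.subst G Q₂) = 0 :=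
    fun p hp => coeff_subst_vanish hG hQ₂ hp
  rw [hrhs, map_add, map_add, map_add,
    mul_vanish_right hvQ₂ I le_rfl, mul_vanish_left hvQ₁ I le_rfl,
    mul_vanish_left hvQ₁ I le_rfl, hPP]


/-! ### chain rule -/

lemma pd_zero (j : Fin n) : pd j (0 : R n) = 0 := by
  ext I
  simp [coeff_pd]

lemma pd_one (j : Fin n) : pd j (1 : R n) = 0 := by
  ext I
  have hne : I + Finsupp.single j 1 ≠ 0 := by
    intro h
    have := congrArg (fun K => (K : E n) j) h
    simp [Finsupp.add_apply, Finsupp.single_apply] at this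
  simp [coeff_pd, MvPowerSeries.coeff_one, hne]

lemma pd_X (k m : Fin n) : pd k (MvPowerSeries.X m : R n) = if k = m then 1 else 0 := by
  ext I
  rw [coeff_pd, MvPowerSeries.X, MvPowerSeries.coeff_monomial]
  by_cases hkm : k = m
  · subst hkm
    by_cases hI : I = 0
    · subst hI
      simp
    · have h1 : I + Finsupp.single k 1 ≠ Finsupp.single k 1 := by
        intro h
        exact hI (by simpa using add_right_cancel (h.trans (zero_add _).symm))
      rw [if_neg h1, if_pos rfl, mul_zero]
      simp [MvPowerSeries.coeff_one, hI]
  · have h1 : I + Finsupp.single k 1 ≠ Finsupp.single m 1 := by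
      intro h
      have := congrArg (fun K => (K : E n) k) h
      simp [Finsupp.add_apply, Finsupp.single_apply, Ne.symm hkm] at this
    rw [if_neg h1, if_neg hkm, mul_zero]
    simp

def CR (G : Fin n → R n) (j : Fin n) (F : R n) : Prop :=
  pd j (_root_.subst G F) = ∑ k, _root_.subst G (pd k F) * pd j (G k)

variable {G : Fin n → R n}

lemma CR_zero (j : Fin n) : CR G j 0 := by
  simp [CR, subst_zero, pd_zero]

lemma CR_add {j : Fin n} {a b : R n} (ha : CR G j a) (hb : CR G j b) : CR G j (a + b) := by
  unfold CR at *
  rw [subst_add, pd_add, ha, hb, ← Finset.sum_add_distrib]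
  refine Finset.sum_congr rfl fun k _ => ?_
  rw [pd_add, subst_add, add_mul]

lemma CR_smul {j : Fin n} {a : R n} (c : ℂ) (ha : CR G j a) : CR G j (c • a) := by
  unfold CR at *
  rw [subst_smul, pd_smul, ha, Finset.smul_sum]
  refine Finset.sum_congr rfl fun k _ => ?_
  rw [pd_smul, subst_smul, smul_mul_assoc]

section hG
variable (hG : ∀ j, MvPowerSeries.constantCoeff (G j) = 0)
include hG

lemma CR_one (j : Fin n) : CR G j 1 := by
  simp [CR, subst_one hG, pd_one, subst_zero]

lemma prodpow_single (m : Fin n) : (∏ l, G l ^ (Finsupp.single m 1) l) = G m := by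
  rw [Finset.prod_eq_single m (fun l _ hl => by
    simp [Finsupp.single_apply, Ne.symm hl]) (fun h => absurd (Finset.mem_univ m) h)]
  simp

lemma subst_X (m : Fin n) : _root_.subst G (MvPowerSeries.X m : R n) = G m := by
  rw [MvPowerSeries.X, subst_monomial hG, prodpow_single hG, one_smul]

lemma CR_X (j m : Fin n) : CR G j (MvPowerSeries.X m : R n) := by
  unfold CR
  rw [subst_X hG]
  rw [Finset.sum_eq_single_of_mem m (Finset.mem_univ m) (fun k _ hk => by
    rw [pd_X, if_neg hk, subst_zero, zero_mul])]
  rw [pd_X, if_pos rfl, subst_one hG, one_mul]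

lemma CR_mul {j : Fin n} {a b : R n} (ha : CR G j a) (hb : CR G j b) : CR G j (a * b) := by
  unfold CR at *
  rw [subst_mul hG, pd_mul, ha, hb, Finset.sum_mul, Finset.mul_sum, ← Finset.sum_add_distrib]
  refine Finset.sum_congr rfl fun k _ => ?_
  rw [pd_mul, subst_add, subst_mul hG, subst_mul hG, add_mul]
  ring

lemma CR_pow (j m : Fin n) (k : ℕ) : CR G j ((MvPowerSeries.X m : R n) ^ k) := by
  induction k with
  | zero => rw [pow_zero]; exact CR_one hG j
  | succ i ih => rw [pow_succ]; exact CR_mul hG ih (CR_X hG j m)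

lemma CR_monomial (j : Fin n) (J : E n) (c : ℂ) :
    CR G j (MvPowerSeries.monomial J c) := by
  have hprodmono : ∀ s : Finset (Fin n),
      (∏ l ∈ s, (MvPowerSeries.X l : R n) ^ J l) =
        MvPowerSeries.monomial (∑ l ∈ s, Finsupp.single l (J l)) 1 := by
    intro s
    induction s using Finset.cons_induction with
    | empty => simp [MvPowerSeries.monomial_zero_one]
    | cons a s ha ih =>
      rw [Finset.prod_cons, Finset.sum_cons, ih, MvPowerSeries.X_pow_eq,
        MvPowerSeries.monomial_mul_monomial, one_mul]
  have hsum : (∑ l, Finsupp.single l (J l)) = J := by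
    ext a
    rw [Finset.sum_apply']
    simp [Finsupp.single_apply]
  have hmono1 : MvPowerSeries.monomial J (1 : ℂ) =
      ∏ l, (MvPowerSeries.X l : R n) ^ J l := by
    rw [hprodmono Finset.univ, hsum]
  have hCR1 : CR G j (MvPowerSeries.monomial J (1 : ℂ)) := by
    rw [hmono1]
    exact Finset.prod_induction _ (CR G j) (fun a b => CR_mul hG) (CR_one hG j)
      (fun m _ => CR_pow hG j m (J m))
  have : MvPowerSeries.monomial J c = c • MvPowerSeries.monomial J (1 : ℂ) := by
    rw [← map_smul, smul_eq_mul, mul_one]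
  rw [this]
  exact CR_smul c hCR1

lemma chain_rule (j : Fin n) (F : R n) :
    pd j (_root_.subst G F) = ∑ k, _root_.subst G (pd k F) * pd j (G k) := by
  ext I
  obtain ⟨Q, hF, hQ⟩ := decomp F (dg I + 1)
  set P := ∑ K ∈ Finset.Iic (cfun (n := n) (dg I + 1)),
    MvPowerSeries.monomial K (MvPowerSeries.coeff K F) with hP
  have hCRP : CR G j P :=
    Finset.sum_induction _ (CR G j) (fun a b => CR_add) (CR_zero j)
      (fun K _ => CR_monomial hG j K _)
  have hQL : MvPowerSeries.coeff I (pd j (_root_.subst G Q)) = 0 := by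
    rw [coeff_pd]
    rw [coeff_subst_vanish hG hQ (by rw [dg_add, dg_single])]
    ring
  have hQR : ∀ k, MvPowerSeries.coeff I (_root_.subst G (pd k Q) * pd j (G k)) = 0 := by
    intro k
    have hpdQ : ∀ J, dg J ≤ dg I → MvPowerSeries.coeff J (pd k Q) = 0 := by
      intro J hJ
      rw [coeff_pd, hQ _ (by rw [dg_add, dg_single]; omega), mul_zero]
    have hv : ∀ p : E n, dg p ≤ dg I → MvPowerSeries.coeff p (_root_.subst G (pd k Q)) = 0 :=
      fun p hp => coeff_subst_vanish hG hpdQ hp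
    exact mul_vanish_left hv I le_rfl
  have hL : MvPowerSeries.coeff I (pd j (_root_.subst G F)) =
      MvPowerSeries.coeff I (pd j (_root_.subst G P)) := by
    rw [hF, subst_add, pd_add, map_add, hQL, add_zero]
  have hR : MvPowerSeries.coeff I (∑ k, _root_.subst G (pd k F) * pd j (G k)) =
      MvPowerSeries.coeff I (∑ k, _root_.subst G (pd k P) * pd j (G k)) := by
    rw [map_sum, map_sum]
    refine Finset.sum_congr rfl fun k _ => ?_
    rw [hF, pd_add, subst_add, add_mul, map_add, hQR k, add_zero]
  rw [hL, hR, hCRP]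

end hG


noncomputable def substRingHom {G : Fin n → R n}
    (hG : ∀ j, MvPowerSeries.constantCoeff (G j) = 0) : R n →+* R n where
  toFun := _root_.subst G
  map_one' := subst_one hG
  map_mul' := subst_mul hG
  map_zero' := subst_zero G
  map_add' := subst_add G

end Aux

/-- Let `f̂₁, …, f̂ₙ` be formal power series with zero constant term, transverse
at the origin (`(df̂₁ ∧ ⋯ ∧ df̂ₙ)(0) ≠ 0`, i.e. the Jacobian matrix at `0` is
invertible).  Then `H = (f̂₁, …, f̂ₙ)` is a formal diffeomorphism (its Jacobian
matrix `dH` is invertible over the power series ring), the formal vector field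
`X = (dH)⁻¹ · H` equals the radial field `R` plus higher order terms, and every
formal diffeomorphism `Ĝ` in the invariance group `H(f̂₁, …, f̂ₙ)` (i.e. with
`f̂ᵢ ∘ Ĝ = f̂ᵢ` for all `i`) leaves `X` invariant: `Ĝ*X = X`, equivalently
`X ∘ Ĝ = dĜ · X`. -/
theorem stmt_16 {n : ℕ} (f : Fin n → MvPowerSeries (Fin n) ℂ)
    (hconst : ∀ i, MvPowerSeries.constantCoeff (f i) = 0)
    (htrans : IsUnit (Matrix.of fun i j =>
      MvPowerSeries.coeff (Finsupp.single j 1) (f i)).det) :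
    IsUnit (Matrix.of fun i j => pd j (f i)).det ∧
    (∀ i, MvPowerSeries.coeff 0
        ((fun i => ∑ j, (Matrix.of fun i j => pd j (f i))⁻¹ i j * f j) i) = 0) ∧
    (∀ i j, MvPowerSeries.coeff (Finsupp.single j 1)
        ((fun i => ∑ j, (Matrix.of fun i j => pd j (f i))⁻¹ i j * f j) i) =
        if i = j then 1 else 0) ∧
    ∀ G : Fin n → MvPowerSeries (Fin n) ℂ,
      (∀ i, MvPowerSeries.constantCoeff (G i) = 0) →
      IsUnit (Matrix.of fun i j =>
        MvPowerSeries.coeff (Finsupp.single j 1) (G i)).det →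
      (∀ i, _root_.subst G (f i) = f i) →
      ∀ i, _root_.subst G ((fun i => ∑ j, (Matrix.of fun i j => pd j (f i))⁻¹ i j * f j) i) =
        ∑ j, pd j (G i) * (fun i => ∑ j, (Matrix.of fun i j => pd j (f i))⁻¹ i j * f j) j := by
  classical
  set A : Matrix (Fin n) (Fin n) (Aux.R n) := Matrix.of fun i j => pd j (f i) with hA
  set c0 : Aux.R n →+* ℂ := MvPowerSeries.constantCoeff with hc0
  have hA0 : ∀ i j, c0 (A i j) = MvPowerSeries.coeff (Finsupp.single j 1) (f i) := by
    intro i j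
    rw [hc0, ← MvPowerSeries.coeff_zero_eq_constantCoeff_apply, hA]
    show MvPowerSeries.coeff 0 (pd j (f i)) = _
    rw [Aux.coeff_pd]
    simp
  -- part 1
  have hdet : IsUnit A.det := by
    rw [MvPowerSeries.isUnit_iff_constantCoeff]
    have hmapA : A.map c0 = Matrix.of fun i j =>
        MvPowerSeries.coeff (Finsupp.single j 1) (f i) := by
      ext i j
      exact hA0 i j
    have : c0 A.det = (A.map c0).det := RingHom.map_det c0 A
    rw [show MvPowerSeries.constantCoeff A.det = c0 A.det from rfl, this, hmapA]
    exact htrans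
  refine ⟨hdet, ?_, ?_, ?_⟩
  -- part 2
  · intro i
    simp only
    rw [map_sum]
    refine Finset.sum_eq_zero fun k _ => ?_
    rw [MvPowerSeries.coeff_zero_eq_constantCoeff_apply]
    rw [show MvPowerSeries.constantCoeff (A⁻¹ i k * f k) =
      c0 (A⁻¹ i k) * c0 (f k) from map_mul c0 _ _]
    rw [show c0 (f k) = 0 from hconst k, mul_zero]
  -- part 3
  · intro i j
    simp only
    have hinv : A⁻¹ * A = 1 := Matrix.nonsing_inv_mul A hdet
    have hmap : (A⁻¹.map c0) * (A.map c0) = 1 := by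
      have h1 := congrArg (fun M => M.map (c0 : Aux.R n →+* ℂ).toFun) hinv
      simpa [Matrix.map_mul] using h1
    have key : ∀ (a b : Aux.R n), c0 b = 0 →
        MvPowerSeries.coeff (Finsupp.single j 1) (a * b) =
          c0 a * MvPowerSeries.coeff (Finsupp.single j 1) b := by
      intro a b hb
      have h1 : MvPowerSeries.coeff (Finsupp.single j 1) (a * b) =
          MvPowerSeries.coeff 0 (pd j (a * b)) := by
        rw [Aux.coeff_pd]
        simp
      rw [h1, Aux.pd_mul, map_add]
      have h2 : MvPowerSeries.coeff 0 (pd j a * b) = 0 := by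
        rw [MvPowerSeries.coeff_zero_eq_constantCoeff_apply,
          show MvPowerSeries.constantCoeff (pd j a * b) =
            c0 (pd j a) * c0 b from map_mul c0 _ _, hb, mul_zero]
      have h3 : MvPowerSeries.coeff 0 (a * pd j b) =
          c0 a * MvPowerSeries.coeff (Finsupp.single j 1) b := by
        rw [MvPowerSeries.coeff_zero_eq_constantCoeff_apply,
          show MvPowerSeries.constantCoeff (a * pd j b) =
            c0 a * c0 (pd j b) from map_mul c0 _ _]
        congr 1
        rw [hc0, ← MvPowerSeries.coeff_zero_eq_constantCoeff_apply, Aux.coeff_pd]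
        simp
      rw [h2, h3, zero_add]
    rw [map_sum]
    have hterm : ∀ k, MvPowerSeries.coeff (Finsupp.single j 1) (A⁻¹ i k * f k) =
        (A⁻¹.map c0) i k * (A.map c0) k j := by
      intro k
      rw [key _ _ (hconst k)]
      rw [show (MvPowerSeries.coeff (Finsupp.single j 1)) (f k) = (A.map ⇑c0) k j from
        (hA0 k j).symm]
      rfl
    rw [Finset.sum_congr rfl fun k _ => hterm k]
    have := congrFun (congrFun (congrArg (fun M => (M : Matrix (Fin n) (Fin n) ℂ)) hmap) i) j
    rw [show ∑ k, (A⁻¹.map c0) i k * (A.map c0) k j =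
      ((A⁻¹.map c0) * (A.map c0)) i j from (Matrix.mul_apply).symm, hmap, Matrix.one_apply]
  -- part 4
  · intro G hGc hGdet hfG i
    simp only
    set S : Aux.R n →+* Aux.R n := Aux.substRingHom hGc with hS
    have hSfun : ∀ F, S F = _root_.subst G F := fun _ => rfl
    set B : Matrix (Fin n) (Fin n) (Aux.R n) := Matrix.of fun k j => pd j (G k) with hB
    have hAeq : A = (A.map S) * B := by
      refine Matrix.ext fun i' j' => ?_
      rw [Matrix.mul_apply]
      show pd j' (f i') = _
      conv_lhs => rw [← hfG i']
      rw [Aux.chain_rule hGc j' (f i')]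
      rfl
    have hdetA' : IsUnit (A.map S).det := by
      rw [show (A.map ⇑S).det = S A.det from (RingHom.map_det S A).symm]
      exact hdet.map S
    set Xv : Fin n → Aux.R n := A⁻¹.mulVec f with hXv
    have hXv' : ∀ k, Xv k = ∑ l, A⁻¹ k l * f l := by
      intro k
      simp [hXv, Matrix.mulVec, dotProduct]
    have hAX : A.mulVec Xv = f := by
      rw [hXv, Matrix.mulVec_mulVec, Matrix.mul_nonsing_inv A hdet, Matrix.one_mulVec]
    have h1 : (A.map S).mulVec (fun k => S (Xv k)) = f := by
      funext i'
      rw [Matrix.mulVec, dotProduct]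
      have : ∑ k, (A.map S) i' k * S (Xv k) = S (∑ k, A i' k * Xv k) := by
        rw [map_sum]
        exact Finset.sum_congr rfl fun k _ => (map_mul S _ _).symm
      rw [this]
      have : (∑ k, A i' k * Xv k) = (A.mulVec Xv) i' := by
        simp [Matrix.mulVec, dotProduct]
      rw [this, hAX, hSfun, hfG]
    have h2 : (A.map S).mulVec (B.mulVec Xv) = f := by
      rw [Matrix.mulVec_mulVec, ← hAeq, hAX]
    have h3 : (fun k => S (Xv k)) = B.mulVec Xv := by
      have h12 := h1.trans h2.symm
      have := congrArg (fun w => (A.map ⇑S)⁻¹.mulVec w) h12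
      simpa [Matrix.mulVec_mulVec, ← Matrix.mul_assoc,
        Matrix.nonsing_inv_mul _ hdetA', Matrix.one_mulVec] using this
    have h4 := congrFun h3 i
    rw [hSfun] at h4
    rw [show (∑ j, A⁻¹ i j * f j) = Xv i from (hXv' i).symm, h4]
    rw [Matrix.mulVec, dotProduct]
    exact Finset.sum_congr rfl fun k _ => by rw [hXv' k]; rfl
end
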